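/- Let A be the infinite sequence of powers of 2, and for real x let σ_x^{(A)}(n) = ∑_{j≥0, 2^j | n} 2^{jx}. Write n = 2^{α_1 - 1} + … + 2^{α_m - 1} with α_1 < … < α_m (binary expansion). Then σ_x^{(A)}(n) = (-1)^{s(2n+1)} (2^{(α_1-1)x} + … + 2^{(α_m-1)x}) - ∑_{j=1}^{n-1} (-1)^{s(n-j)} σ_x^{(A)}(j), where s is the binary digit sum and m = s(n). -/

import Mathlib

/-- Binary digit sum: number of ones in the binary expansion of `n`. -/
def binDigitSum (n : ℕ) : ℕ := (Nat.digits 2 n).sum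

/-- `σ_x^{(A)}(n) = ∑_{j ≥ 0, 2^j ∣ n} 2^{jx} = ∑_{j=0}^{v_2(n)} 2^{jx}`, for the infinite
sequence `A` of powers of `2`. -/
noncomputable def sigmaPow2 (x : ℝ) (n : ℕ) : ℝ :=
  ∑ j ∈ Finset.range (padicValNat 2 n + 1), (2 : ℝ) ^ ((j : ℝ) * x)

/-!
Write `ε(m) = (-1)^{s(m)}` and expand `σ_x^{(A)}(j) = ∑_{2^i ∣ j} 2^{ix}`. In the convolution
`∑_{j=1}^{n} ε(n-j) σ_x^{(A)}(j)` the coefficient of `2^{ix}` is `∑_{k=1}^{q} ε(n - 2^i k)`, where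
`n = 2^i q + r` with `r < 2^i`. Since `n - 2^i k = 2^i (q-k) + r` has the digits of `q - k` above
those of `r`, this is `ε(r) ∑_{m<q} ε(m)`, a partial sum of the Thue–Morse sequence: it vanishes
for even `q` (the terms pair off as `ε(2t) + ε(2t+1) = 0`) and is `-ε(q)` for odd `q`, i.e. when bit
`i` of `n` is set. Hence the convolution equals `-ε(n) ∑_{i ∈ bits(n)} 2^{ix}`; splitting off the
term `j = n` and using `s(2n+1) = s(n) + 1` gives the formula.
-/

open Finset

@[simp]
lemma binDigitSum_zero : binDigitSum 0 = 0 := rfl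

lemma binDigitSum_add_two_pow_mul {r i : ℕ} (hr : r < 2 ^ i) (q : ℕ) :
    binDigitSum (r + 2 ^ i * q) = binDigitSum r + binDigitSum q := by
  rcases q.eq_zero_or_pos with rfl | hq
  · simp
  obtain ⟨k, hk⟩ := Nat.exists_eq_add_of_le ((Nat.digits_length_le_iff (by norm_num) r).mpr hr)
  rw [binDigitSum, hk, ← Nat.digits_append_zeroes_append_digits (by norm_num) hq]
  simp [binDigitSum]

lemma binDigitSum_two_mul (n : ℕ) : binDigitSum (2 * n) = binDigitSum n := by
  simpa using binDigitSum_add_two_pow_mul (r := 0) (i := 1) (by norm_num) n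

lemma binDigitSum_two_mul_add_one (n : ℕ) : binDigitSum (2 * n + 1) = binDigitSum n + 1 := by
  simpa [add_comm, binDigitSum] using binDigitSum_add_two_pow_mul (r := 1) (i := 1) (by norm_num) n

lemma sum_range_two_mul_neg_one_pow_binDigitSum (t : ℕ) :
    ∑ m ∈ range (2 * t), (-1 : ℝ) ^ binDigitSum m = 0 := by
  induction t with
  | zero => simp
  | succ t ih =>
    rw [mul_add_one, sum_range_succ, sum_range_succ, ih, binDigitSum_two_mul_add_one,
      binDigitSum_two_mul, pow_succ]
    ring

lemma sum_range_neg_one_pow_binDigitSum (q : ℕ) :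
    ∑ m ∈ range q, (-1 : ℝ) ^ binDigitSum m =
      if q % 2 = 1 then -(-1 : ℝ) ^ binDigitSum q else 0 := by
  obtain ⟨t, rfl | rfl⟩ := Nat.even_or_odd' q
  · rw [sum_range_two_mul_neg_one_pow_binDigitSum, if_neg (by omega)]
  · rw [sum_range_succ, sum_range_two_mul_neg_one_pow_binDigitSum, if_pos (by omega),
      binDigitSum_two_mul_add_one, binDigitSum_two_mul, pow_succ]
    ring

lemma sum_Icc_one_filter_dvd {M : Type*} [AddCommMonoid M] (f : ℕ → M) {d : ℕ} (hd : 0 < d)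
    (N : ℕ) : ∑ j ∈ Icc 1 N with d ∣ j, f j = ∑ k ∈ Icc 1 (N / d), f (d * k) := by
  rw [← sum_image fun a _ b _ h ↦ Nat.eq_of_mul_eq_mul_left hd h]
  congr 1
  ext j
  simp only [mem_filter, mem_Icc, mem_image, Nat.le_div_iff_mul_le hd]
  constructor
  · rintro ⟨⟨hj1, hjN⟩, k, rfl⟩
    exact ⟨k, ⟨Nat.pos_of_mul_pos_left hj1, by linarith⟩, rfl⟩
  · rintro ⟨k, ⟨hk1, hkN⟩, rfl⟩
    exact ⟨⟨Nat.mul_pos hd hk1, by linarith⟩, dvd_mul_right d k⟩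

lemma sum_Icc_one_sub {M : Type*} [AddCommMonoid M] (f : ℕ → M) (q : ℕ) :
    ∑ k ∈ Icc 1 q, f (q - k) = ∑ m ∈ range q, f m := by
  rw [← Ico_add_one_right_eq_Icc, sum_Ico_reflect f 1 le_rfl]
  simp

lemma sigmaPow2_eq_sum_range_ite (x : ℝ) {j N : ℕ} (hj : j ≠ 0) (hjN : j ≤ N) :
    sigmaPow2 x j = ∑ i ∈ range (N + 1), if 2 ^ i ∣ j then (2 : ℝ) ^ ((i : ℝ) * x) else 0 := by
  have hv : padicValNat 2 j < N + 1 :=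
    (padicValNat_le_nat_log j).trans_lt ((Nat.log_lt_self 2 hj).trans_le (by omega))
  rw [← sum_filter, sigmaPow2]
  congr 1
  ext i
  simp only [mem_range, mem_filter, padicValNat_dvd_iff_le hj]
  omega

lemma sum_Icc_neg_one_pow_binDigitSum_sub_two_pow_mul (n i : ℕ) :
    ∑ k ∈ Icc 1 (n / 2 ^ i), (-1 : ℝ) ^ binDigitSum (n - 2 ^ i * k) =
      if n.testBit i then -(-1 : ℝ) ^ binDigitSum n else 0 := by
  set q := n / 2 ^ i
  set r := n % 2 ^ i
  have hr : r < 2 ^ i := Nat.mod_lt _ (by positivity)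
  have hn : n = r + 2 ^ i * q := (Nat.mod_add_div n (2 ^ i)).symm
  have hsub : ∀ k ∈ Icc 1 q, binDigitSum (n - 2 ^ i * k) = binDigitSum r + binDigitSum (q - k) := by
    intro k hk
    rw [← binDigitSum_add_two_pow_mul hr, Nat.mul_sub, hn]
    have : 2 ^ i * k ≤ 2 ^ i * q := Nat.mul_le_mul_left _ (mem_Icc.mp hk).2
    congr 1
    omega
  rw [sum_congr rfl fun k hk ↦ by rw [hsub k hk, pow_add], ← mul_sum,
    sum_Icc_one_sub (fun m ↦ (-1 : ℝ) ^ binDigitSum m), sum_range_neg_one_pow_binDigitSum,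
    Nat.testBit_eq_decide_div_mod_eq,
    show binDigitSum n = _ by rw [hn, binDigitSum_add_two_pow_mul hr]]
  by_cases hq : q % 2 = 1 <;> simp [hq, pow_add, show n / 2 ^ i = q from rfl]

lemma sum_Icc_neg_one_pow_binDigitSum_sub_mul_sigmaPow2 (x : ℝ) (n : ℕ) :
    ∑ j ∈ Icc 1 n, (-1 : ℝ) ^ binDigitSum (n - j) * sigmaPow2 x j =
      -(-1 : ℝ) ^ binDigitSum n *
        ∑ i ∈ range (n + 1), if n.testBit i then (2 : ℝ) ^ ((i : ℝ) * x) else 0 := by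
  calc ∑ j ∈ Icc 1 n, (-1 : ℝ) ^ binDigitSum (n - j) * sigmaPow2 x j
      = ∑ j ∈ Icc 1 n, ∑ i ∈ range (n + 1),
          if 2 ^ i ∣ j then (-1 : ℝ) ^ binDigitSum (n - j) * (2 : ℝ) ^ ((i : ℝ) * x) else 0 := by
        refine sum_congr rfl fun j hj ↦ ?_
        obtain ⟨hj1, hjn⟩ := mem_Icc.mp hj
        simp only [sigmaPow2_eq_sum_range_ite x (by omega : j ≠ 0) hjn, mul_sum, mul_ite, mul_zero]
    _ = ∑ i ∈ range (n + 1), (∑ k ∈ Icc 1 (n / 2 ^ i), (-1 : ℝ) ^ binDigitSum (n - 2 ^ i * k)) *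
          (2 : ℝ) ^ ((i : ℝ) * x) := by
        rw [sum_comm]
        refine sum_congr rfl fun i _ ↦ ?_
        rw [← sum_filter, sum_Icc_one_filter_dvd _ (by positivity), sum_mul]
    _ = _ := by
        simp only [sum_Icc_neg_one_pow_binDigitSum_sub_two_pow_mul, mul_sum, ite_mul, zero_mul,
          mul_ite, mul_zero]

/-- With `n = 2^{α_1-1} + … + 2^{α_m-1}` (binary expansion, so the `α_j - 1` are the set
bit positions of `n`):
`σ_x^{(A)}(n) = (-1)^{s(2n+1)}(2^{(α_1-1)x}+…+2^{(α_m-1)x}) - ∑_{j=1}^{n-1}(-1)^{s(n-j)} σ_x^{(A)}(j)`. -/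
theorem stmt_18 (x : ℝ) (n : ℕ) (hn : 1 ≤ n) :
    sigmaPow2 x n =
      (-1 : ℝ) ^ binDigitSum (2 * n + 1) *
        (∑ i ∈ Finset.range (n + 1), if n.testBit i then (2 : ℝ) ^ ((i : ℝ) * x) else 0)
      - ∑ j ∈ Finset.Icc 1 (n - 1), (-1 : ℝ) ^ binDigitSum (n - j) * sigmaPow2 x j := by
  have hsum := sum_Icc_neg_one_pow_binDigitSum_sub_mul_sigmaPow2 x n
  obtain ⟨m, rfl⟩ : ∃ m, n = m + 1 := ⟨n - 1, by omega⟩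
  rw [sum_Icc_succ_top (by omega), Nat.sub_self, binDigitSum_zero] at hsum
  rw [binDigitSum_two_mul_add_one, pow_succ, Nat.add_sub_cancel]
  linarith
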